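/- For any table φ_1, …, φ_n, the Prox-Finito Lyapunov value decreases in expectation over the uniformly random index: (1/n)∑_{j=1}^n [f(w*) − B^(j)(w^(j))] ≤ (1 − μ/(μn + L − μ)) [f(w*) − B(w)], where B^(j) and w^(j) are the lower bound and its minimizer after the Prox-Finito update with index j. -/

import Mathlib

open scoped RealInnerProductSpace

/-- The strong-convexity lower bound `l_i` attached to table entry `φ i`. -/
noncomputable def pfL (d n : ℕ) (μ : ℝ)
    (f : Fin n → EuclideanSpace ℝ (Fin d) → ℝ)
    (f' : Fin n → EuclideanSpace ℝ (Fin d) → EuclideanSpace ℝ (Fin d))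
    (φ : Fin n → EuclideanSpace ℝ (Fin d)) (i : Fin n)
    (x : EuclideanSpace ℝ (Fin d)) : ℝ :=
  f i (φ i) + ⟪f' i (φ i), x - φ i⟫ + μ / 2 * ‖x - φ i‖ ^ 2

/-- The global lower bound `B` associated with a table `φ`. -/
noncomputable def pfB (d n : ℕ) (μ : ℝ)
    (f : Fin n → EuclideanSpace ℝ (Fin d) → ℝ)
    (f' : Fin n → EuclideanSpace ℝ (Fin d) → EuclideanSpace ℝ (Fin d))
    (φ : Fin n → EuclideanSpace ℝ (Fin d))
    (x : EuclideanSpace ℝ (Fin d)) : ℝ :=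
  (1 / (n : ℝ)) * ∑ i, pfL d n μ f f' φ i x

/-- The minimizer of the global lower bound `B` associated with a table `φ`. -/
noncomputable def pfW (d n : ℕ) (μ : ℝ)
    (f' : Fin n → EuclideanSpace ℝ (Fin d) → EuclideanSpace ℝ (Fin d))
    (φ : Fin n → EuclideanSpace ℝ (Fin d)) : EuclideanSpace ℝ (Fin d) :=
  (1 / (n : ℝ)) • ∑ i, φ i - (1 / (μ * n)) • ∑ i, f' i (φ i)

/-!
Let `Q_j` be the quadratic model `f_j(w*) + ⟨∇f_j(w*), x - w*⟩ + μ/2 ‖x - w*‖²` of `f_j` at `w*`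
(`l_j` is its model at `φ_j`), `w` the minimiser of `B`, and `c = μ / (μ n + L - μ)`.
Because `f_j - μ/2 ‖·‖²` is convex and `(L - μ)`-smooth, `f_j` dominates `(1 - n c) l_j + n c Q_j`
with a surplus proportional to `‖∇f_j(w*) - ∇f_j(φ_j) - μ (w* - φ_j)‖²`. By Fermat's rule the new
entry `φ_j^{new}` minimises the updated lower bound, whose value there is
`(f_j(φ_j^{new}) + ∑_{i ≠ j} l_i(φ_j^{new})) / n`; inserting the domination and completing a
square gives `B^{(j)}(w^{(j)}) ≥ B(w) + c (Q_j(w) - l_j(w))`. Averaged over `j`, the `Q_j(w)` give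
`f(w*) + μ/2 ‖w - w*‖²` since `∇f(w*) = 0`, and the `l_j(w)` give `B(w)`.
-/

open Set

theorem sum_erase_apply_update {ι α M : Type*} [DecidableEq ι] [AddCommMonoid M] (s : Finset ι)
    (g : ι → α → M) (φ : ι → α) (j : ι) (z : α) :
    ∑ i ∈ s.erase j, g i (Function.update φ j z i) = ∑ i ∈ s.erase j, g i (φ i) :=
  Finset.sum_congr rfl fun i hi => by rw [Function.update_of_ne (Finset.ne_of_mem_erase hi)]

section QuadModel

variable {E : Type*} [NormedAddCommGroup E] [InnerProductSpace ℝ E]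

noncomputable def quadModel (μ : ℝ) (g : E → ℝ) (g' : E → E) (p x : E) : ℝ :=
  g p + ⟪g' p, x - p⟫ + μ / 2 * ‖x - p‖ ^ 2

theorem quadModel_eq_add (μ : ℝ) (g : E → ℝ) (g' : E → E) (p x y : E) :
    quadModel μ g g' p x
      = quadModel μ g g' p y + ⟪g' p + μ • (y - p), x - y⟫ + μ / 2 * ‖x - y‖ ^ 2 := by
  have hx : x - p = (x - y) + (y - p) := by abel
  rw [quadModel, quadModel, hx, inner_add_right, norm_add_sq_real, inner_add_left,
    real_inner_smul_left, real_inner_comm (x - y) (y - p)]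
  ring

theorem sum_quadModel {ι : Type*} (s : Finset ι) (μ : ℝ) (g : ι → E → ℝ) (g' : ι → E → E)
    (p x : E) :
    ∑ i ∈ s, quadModel μ (g i) (g' i) p x
      = ∑ i ∈ s, g i p + ⟪∑ i ∈ s, g' i p, x - p⟫ + s.card * (μ / 2 * ‖x - p‖ ^ 2) := by
  simp only [quadModel, Finset.sum_add_distrib, sum_inner, Finset.sum_const, nsmul_eq_mul]

theorem mul_one_sub_mul_norm_sub_sq_le (a b : E) (s : ℝ) :
    s * (1 - s) * ‖a - b‖ ^ 2 ≤ (1 - s) * ‖a‖ ^ 2 + s * ‖b‖ ^ 2 := by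
  have : (1 - s) * ‖a‖ ^ 2 + s * ‖b‖ ^ 2 - s * (1 - s) * ‖a - b‖ ^ 2
      = ‖(1 - s) • a + s • b‖ ^ 2 := by
    rw [norm_add_sq_real, norm_sub_sq_real, norm_smul, norm_smul, real_inner_smul_left,
      real_inner_smul_right, Real.norm_eq_abs, Real.norm_eq_abs, mul_pow, mul_pow, sq_abs, sq_abs]
    ring
  linarith [sq_nonneg ‖(1 - s) • a + s • b‖]

end QuadModel

section Gradient

variable {E : Type*} [NormedAddCommGroup E] [InnerProductSpace ℝ E] [CompleteSpace E]

theorem HasGradientAt.add {f g : E → ℝ} {f' g' x : E} (hf : HasGradientAt f f' x)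
    (hg : HasGradientAt g g' x) : HasGradientAt (fun y => f y + g y) (f' + g') x := by
  rw [hasGradientAt_iff_hasFDerivAt, map_add]
  exact hf.hasFDerivAt.add hg.hasFDerivAt

theorem HasGradientAt.sum {ι : Type*} {u : Finset ι} {f : ι → E → ℝ} {f' : ι → E} {x : E}
    (h : ∀ i ∈ u, HasGradientAt (f i) (f' i) x) :
    HasGradientAt (fun y => ∑ i ∈ u, f i y) (∑ i ∈ u, f' i) x := by
  rw [hasGradientAt_iff_hasFDerivAt, map_sum]
  exact HasFDerivAt.fun_sum fun i hi => (h i hi).hasFDerivAt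

theorem HasGradientAt.eq_zero_of_forall_le {f : E → ℝ} {f' x : E} (hf : HasGradientAt f f' x)
    (hmin : ∀ y, f x ≤ f y) : f' = 0 := by
  simpa using IsLocalMin.hasFDerivAt_eq_zero (.of_forall hmin) hf.hasFDerivAt

theorem HasGradientAt.hasDerivAt_comp_add_smul {f : E → ℝ} {f' y v : E} {t : ℝ}
    (hf : HasGradientAt f f' (y + t • v)) :
    HasDerivAt (fun s : ℝ => f (y + s • v)) ⟪f', v⟫ t := by
  have hline : HasDerivAt (fun s : ℝ => y + s • v) v t := by
    simpa using ((hasDerivAt_id t).smul_const v).const_add y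
  simpa [Function.comp_def] using hf.hasFDerivAt.comp_hasDerivAt t hline

theorem hasGradientAt_quadModel (μ : ℝ) (g : E → ℝ) (g' : E → E) (p x : E) :
    HasGradientAt (quadModel μ g g' p) (g' p + μ • (x - p)) x := by
  rw [hasGradientAt_iff_hasFDerivAt]
  have hlin : HasFDerivAt (fun y => ⟪g' p, y - p⟫) (innerSL ℝ (g' p)) x :=
    ((innerSL ℝ (g' p)).hasFDerivAt.sub_const ⟪g' p, p⟫).congr_of_eventuallyEq
      (.of_forall fun y => by simp [inner_sub_right])
  have hsq := ((hasFDerivAt_id x).sub_const p).norm_sq.const_mul (μ / 2)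
  refine ((hlin.const_add (g p)).add hsq).congr_fderiv ?_
  ext v
  simp
  ring

theorem le_quadModel_of_lipschitz_gradient {f : E → ℝ} {f' : E → E} {L : ℝ}
    (hgrad : ∀ x, HasGradientAt f (f' x) x) (hsmooth : ∀ x y, ‖f' x - f' y‖ ≤ L * ‖x - y‖)
    (x y : E) : f x ≤ quadModel L f f' y x := by
  set v := x - y
  let g : ℝ → ℝ := fun t => f (y + t • v) - t * ⟪f' y, v⟫ - L / 2 * t ^ 2 * ‖v‖ ^ 2
  have hderiv : ∀ t, HasDerivAt g (⟪f' (y + t • v), v⟫ - ⟪f' y, v⟫ - L * t * ‖v‖ ^ 2) t := by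
    intro t
    have := (((hgrad (y + t • v)).hasDerivAt_comp_add_smul).sub
      ((hasDerivAt_id t).mul_const ⟪f' y, v⟫)).sub
      (((hasDerivAt_pow 2 t).const_mul (L / 2)).mul_const (‖v‖ ^ 2))
    exact this.congr_deriv (by simp only [Nat.add_one_sub_one, pow_one, Nat.cast_ofNat]; ring)
  have hderiv_nonpos : ∀ t ∈ interior (Icc (0 : ℝ) 1),
      ⟪f' (y + t • v), v⟫ - ⟪f' y, v⟫ - L * t * ‖v‖ ^ 2 ≤ 0 := by
    intro t ht
    rw [interior_Icc] at ht
    rw [sub_nonpos]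
    calc ⟪f' (y + t • v), v⟫ - ⟪f' y, v⟫ = ⟪f' (y + t • v) - f' y, v⟫ := (inner_sub_left ..).symm
      _ ≤ ‖f' (y + t • v) - f' y‖ * ‖v‖ := real_inner_le_norm ..
      _ ≤ L * ‖(y + t • v) - y‖ * ‖v‖ := by gcongr; exact hsmooth ..
      _ = L * t * ‖v‖ ^ 2 := by
        rw [add_sub_cancel_left, norm_smul, Real.norm_of_nonneg ht.1.le]; ring
  have hanti : AntitoneOn g (Icc 0 1) :=
    antitoneOn_of_hasDerivWithinAt_nonpos (convex_Icc 0 1)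
      (fun t _ => (hderiv t).continuousAt.continuousWithinAt)
      (fun t _ => (hderiv t).hasDerivWithinAt) hderiv_nonpos
  have := hanti (by simp) (by simp) zero_le_one
  simp only [g, v, quadModel, one_smul, add_sub_cancel, zero_smul, add_zero] at this ⊢
  linarith

theorem quadModel_add_mul_sq_le_of_lipschitz_gradient {f : E → ℝ} {f' : E → E} {μ L : ℝ}
    (hgrad : ∀ x, HasGradientAt f (f' x) x) (hsmooth : ∀ x y, ‖f' x - f' y‖ ≤ L * ‖x - y‖)
    (hsc : ∀ x y, quadModel μ f f' y x ≤ f x) (x y : E) (t : ℝ) :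
    quadModel μ f f' y x + (t - (L - μ) / 2 * t ^ 2) * ‖f' x - f' y - μ • (x - y)‖ ^ 2
      ≤ f x := by
  set h := f' x - f' y - μ • (x - y)
  have hlow := hsc (x - t • h) y
  have hup := le_quadModel_of_lipschitz_gradient hgrad hsmooth (x - t • h) x
  rw [quadModel_eq_add μ f f' y (x - t • h) x] at hlow
  have hh : ⟪f' y + μ • (x - y), -(t • h)⟫ = ⟪f' x, -(t • h)⟫ + t * ‖h‖ ^ 2 := by
    rw [show f' y + μ • (x - y) = f' x - h by simp only [h]; abel]
    simp only [inner_sub_left, inner_neg_right, real_inner_smul_right, real_inner_self_eq_norm_sq]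
    ring
  simp only [quadModel, sub_sub_cancel_left, norm_neg, norm_smul, Real.norm_eq_abs, mul_pow,
    sq_abs, hh] at hlow hup ⊢
  nlinarith

theorem sq_norm_sub_le_of_lipschitz_gradient {f : E → ℝ} {f' : E → E} {μ L : ℝ}
    (hgrad : ∀ x, HasGradientAt f (f' x) x) (hsmooth : ∀ x y, ‖f' x - f' y‖ ≤ L * ‖x - y‖)
    (hsc : ∀ x y, quadModel μ f f' y x ≤ f x) (hμL : μ ≤ L) (x y : E) :
    ‖f' x - f' y - μ • (x - y)‖ ^ 2 ≤ 2 * (L - μ) * (f x - quadModel μ f f' y x) := by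
  have H := quadModel_add_mul_sq_le_of_lipschitz_gradient hgrad hsmooth hsc x y
  set A := ‖f' x - f' y - μ • (x - y)‖ ^ 2
  rcases hμL.lt_or_eq with hlt | rfl
  · have hK : 0 < L - μ := sub_pos.mpr hlt
    have := H (L - μ)⁻¹
    rw [show (L - μ)⁻¹ - (L - μ) / 2 * (L - μ)⁻¹ ^ 2 = (2 * (L - μ))⁻¹ by field_simp; ring,
      ← le_sub_iff_add_le', inv_mul_le_iff₀ (by positivity)] at this
    exact this
  · -- `t ↦ t * A` is bounded above, so `A = 0`
    simp only [sub_self, zero_div, zero_mul, sub_zero, mul_zero] at H ⊢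
    by_contra! hA
    have := H ((f x - quadModel μ f f' y x + 1) / A)
    rw [div_mul_cancel₀ _ hA.ne'] at this
    linarith

theorem one_sub_mul_quadModel_add_mul_quadModel_le {f : E → ℝ} {f' : E → E} {μ L : ℝ}
    (hgrad : ∀ x, HasGradientAt f (f' x) x) (hsmooth : ∀ x y, ‖f' x - f' y‖ ≤ L * ‖x - y‖)
    (hsc : ∀ x y, quadModel μ f f' y x ≤ f x) (hμL : μ ≤ L) {m s : ℝ} (hm : 0 < m)
    (hs : s = m / (m + (L - μ))) (p q x : E) :
    (1 - s) * quadModel μ f f' p x + s * quadModel μ f f' q x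
      + s ^ 2 / (2 * m) * ‖f' q - f' p - μ • (q - p)‖ ^ 2 ≤ f x := by
  have ha := sq_norm_sub_le_of_lipschitz_gradient hgrad hsmooth hsc hμL x p
  have hb := sq_norm_sub_le_of_lipschitz_gradient hgrad hsmooth hsc hμL x q
  set a := f' x - f' p - μ • (x - p)
  set b := f' x - f' q - μ • (x - q)
  have hab : a - b = f' q - f' p - μ • (q - p) := by simp only [a, b]; module
  rw [← hab]
  rcases hμL.lt_or_eq with hlt | rfl
  · have hK : 0 < L - μ := sub_pos.mpr hlt
    have hs0 : 0 < s := hs ▸ by positivity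
    have hs1 : 1 - s = (L - μ) / (m + (L - μ)) := by rw [hs]; field_simp; ring
    have hconv := mul_one_sub_mul_norm_sub_sq_le a b s
    have hcoeff : s * (1 - s) = (L - μ) * (s ^ 2 / m) := by
      rw [hs1, hs]; field_simp
    have hs1' : 0 ≤ 1 - s := hs1 ▸ by positivity
    have ha' := mul_le_mul_of_nonneg_left ha hs1'
    have hb' := mul_le_mul_of_nonneg_left hb hs0.le
    rw [hcoeff] at hconv
    have hscaled : (L - μ) * (s ^ 2 / (2 * m) * ‖a - b‖ ^ 2)
        ≤ (L - μ) * (f x - ((1 - s) * quadModel μ f f' p x + s * quadModel μ f f' q x)) := by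
      linear_combination (hconv + ha' + hb') / 2
    linarith [le_of_mul_le_mul_left hscaled hK]
  · have hs1 : s = 1 := by rw [hs, sub_self, add_zero, div_self hm.ne']
    have ha0 : a = 0 := by simpa using ha
    have hb0 : b = 0 := by simpa using hb
    simpa [hs1, ha0, hb0] using hsc x q

end Gradient

section ProxFinito

variable {d n : ℕ} {μ : ℝ} {f : Fin n → EuclideanSpace ℝ (Fin d) → ℝ}
  {f' : Fin n → EuclideanSpace ℝ (Fin d) → EuclideanSpace ℝ (Fin d)}
  {φ : Fin n → EuclideanSpace ℝ (Fin d)}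

theorem pfL_eq_quadModel (i : Fin n) :
    pfL d n μ f f' φ i = quadModel μ (f i) (f' i) (φ i) := rfl

theorem sum_grad_pfL (hn : n ≠ 0) (hμ : μ ≠ 0) (x : EuclideanSpace ℝ (Fin d)) :
    ∑ i, (f' i (φ i) + μ • (x - φ i)) = (μ * n) • (x - pfW d n μ f' φ) := by
  simp only [pfW, Finset.sum_add_distrib, smul_sub, Finset.sum_sub_distrib, Finset.sum_const,
    Finset.card_univ, Fintype.card_fin, ← Finset.smul_sum, ← Nat.cast_smul_eq_nsmul ℝ]
  match_scalars <;> field_simp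

theorem pfB_eq_add_sq (hn : n ≠ 0) (hμ : μ ≠ 0) (y : EuclideanSpace ℝ (Fin d)) :
    pfB d n μ f f' φ y = pfB d n μ f f' φ (pfW d n μ f' φ) + μ / 2 * ‖y - pfW d n μ f' φ‖ ^ 2 := by
  have hsum : ∑ i, pfL d n μ f f' φ i y = ∑ i, pfL d n μ f f' φ i (pfW d n μ f' φ)
      + n * (μ / 2 * ‖y - pfW d n μ f' φ‖ ^ 2) := by
    simp only [pfL_eq_quadModel, quadModel_eq_add μ _ _ _ y (pfW d n μ f' φ),
      Finset.sum_add_distrib, ← sum_inner,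
      sum_grad_pfL hn hμ, sub_self, smul_zero, inner_zero_left, add_zero, Finset.sum_const,
      Finset.card_univ, Fintype.card_fin, nsmul_eq_mul]
  rw [pfB, pfB, hsum]
  field_simp

theorem pfW_update_eq (hn : n ≠ 0) (hμ : μ ≠ 0) {j : Fin n} {z : EuclideanSpace ℝ (Fin d)}
    (hcrit : f' j z + ∑ i ∈ Finset.univ.erase j, (f' i (φ i) + μ • (z - φ i)) = 0) :
    pfW d n μ f' (Function.update φ j z) = z := by
  have h := sum_grad_pfL (f' := f') (φ := Function.update φ j z) hn hμ z
  rw [← Finset.add_sum_erase _ _ (Finset.mem_univ j),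
    sum_erase_apply_update _ (fun i p => f' i p + μ • (z - p)), Function.update_self, sub_self,
    smul_zero, add_zero, hcrit, eq_comm, smul_eq_zero, sub_eq_zero] at h
  exact (h.resolve_left (mul_ne_zero hμ (Nat.cast_ne_zero.mpr hn))).symm

theorem pfB_update_self (j : Fin n) (z : EuclideanSpace ℝ (Fin d)) :
    pfB d n μ f f' (Function.update φ j z) z
      = (1 / (n : ℝ)) * (f j z + ∑ i ∈ Finset.univ.erase j, pfL d n μ f f' φ i z) := by
  rw [pfB, ← Finset.add_sum_erase _ _ (Finset.mem_univ j)]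
  simp only [pfL, Function.update_self, sub_self, inner_zero_right, norm_zero, add_zero]
  rw [sum_erase_apply_update _ (fun i p => f i p + ⟪f' i p, z - p⟫ + μ / 2 * ‖z - p‖ ^ 2)]
  simp

theorem grad_eq_zero_of_prox_min (hn : n ≠ 0)
    (hgrad : ∀ i x, HasGradientAt (f i) (f' i x) x) {j : Fin n} {z : EuclideanSpace ℝ (Fin d)}
    (hz : ∀ y, (1 / (n : ℝ)) * f j z
          + (1 / (n : ℝ)) * ∑ i ∈ Finset.univ.erase j, pfL d n μ f f' φ i z
        ≤ (1 / (n : ℝ)) * f j y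
          + (1 / (n : ℝ)) * ∑ i ∈ Finset.univ.erase j, pfL d n μ f f' φ i y) :
    f' j z + ∑ i ∈ Finset.univ.erase j, (f' i (φ i) + μ • (z - φ i)) = 0 := by
  refine ((hgrad j z).add (HasGradientAt.sum fun i _ =>
    hasGradientAt_quadModel μ (f i) (f' i) (φ i) z)).eq_zero_of_forall_le fun y => ?_
  have := hz y
  rw [← mul_add, ← mul_add] at this
  exact le_of_mul_le_mul_left this (by positivity)

theorem pfB_add_le_pfB_update {L : ℝ} (hn : n ≠ 0) (hμ : 0 < μ) (hμL : μ ≤ L)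
    (hgrad : ∀ i x, HasGradientAt (f i) (f' i x) x)
    (hsmooth : ∀ i x y, ‖f' i x - f' i y‖ ≤ L * ‖x - y‖)
    (hsc : ∀ i x y, quadModel μ (f i) (f' i) y x ≤ f i x) (wstar : EuclideanSpace ℝ (Fin d))
    {j : Fin n} {z : EuclideanSpace ℝ (Fin d)}
    (hz : ∀ y, (1 / (n : ℝ)) * f j z
          + (1 / (n : ℝ)) * ∑ i ∈ Finset.univ.erase j, pfL d n μ f f' φ i z
        ≤ (1 / (n : ℝ)) * f j y
          + (1 / (n : ℝ)) * ∑ i ∈ Finset.univ.erase j, pfL d n μ f f' φ i y) :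
    pfB d n μ f f' φ (pfW d n μ f' φ) + μ / (μ * n + L - μ)
        * (quadModel μ (f j) (f' j) wstar (pfW d n μ f' φ) - pfL d n μ f f' φ j (pfW d n μ f' φ))
      ≤ pfB d n μ f f' (Function.update φ j z) (pfW d n μ f' (Function.update φ j z)) := by
  have hnpos : (0 : ℝ) < n := by positivity
  rw [pfW_update_eq hn hμ.ne' (grad_eq_zero_of_prox_min hn hgrad hz), pfB_update_self,
    one_div_mul_eq_div, le_div_iff₀ hnpos]
  have hB := pfB_eq_add_sq (f := f) (f' := f') (φ := φ) hn hμ.ne' z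
  set w := pfW d n μ f' φ
  set c := μ / (μ * n + L - μ)
  have hf := one_sub_mul_quadModel_add_mul_quadModel_le (hgrad j) (hsmooth j) (hsc j) hμL
    (m := μ * n) (s := n * c) (by positivity) (by simp only [c]; field_simp; ring) (φ j) wstar z
  rw [show (n * c) ^ 2 / (2 * (μ * n)) = n * (c ^ 2 / (2 * μ)) by field_simp,
    ← pfL_eq_quadModel] at hf
  set h := f' j wstar - f' j (φ j) - μ • (wstar - φ j)
  have hsplit : n * pfB d n μ f f' φ z
      = pfL d n μ f f' φ j z + ∑ i ∈ Finset.univ.erase j, pfL d n μ f f' φ i z := by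
    rw [pfB, ← Finset.add_sum_erase _ _ (Finset.mem_univ j)]
    field_simp
  -- the quadratic parts of the two models cancel, leaving an affine function with slope `h`
  have hdiff : quadModel μ (f j) (f' j) wstar z - pfL d n μ f f' φ j z
      = quadModel μ (f j) (f' j) wstar w - pfL d n μ f f' φ j w + ⟪h, z - w⟫ := by
    rw [pfL_eq_quadModel, quadModel_eq_add μ _ _ wstar z w, quadModel_eq_add μ _ _ (φ j) z w,
      inner_add_left, inner_add_left, real_inner_smul_left, real_inner_smul_left]
    simp only [h, inner_sub_left, real_inner_smul_left]
    ring
  have hsq : 0 ≤ μ / 2 * ‖z - w‖ ^ 2 + c * ⟪h, z - w⟫ + c ^ 2 / (2 * μ) * ‖h‖ ^ 2 := by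
    have : μ / 2 * ‖(z - w) + (c / μ) • h‖ ^ 2
        = μ / 2 * ‖z - w‖ ^ 2 + c * ⟪h, z - w⟫ + c ^ 2 / (2 * μ) * ‖h‖ ^ 2 := by
      rw [norm_add_sq_real, real_inner_smul_right, norm_smul, mul_pow, Real.norm_eq_abs, sq_abs,
        real_inner_comm]
      field_simp
    exact this ▸ by positivity
  have := mul_nonneg hnpos.le hsq
  linear_combination hf + this - n * c * hdiff + hsplit - n * hB

theorem sum_quadModel_sub_pfL (hn : n ≠ 0) {wstar : EuclideanSpace ℝ (Fin d)}
    (hgrad_star : ∑ i, f' i wstar = 0) (x : EuclideanSpace ℝ (Fin d)) :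
    ∑ j, (quadModel μ (f j) (f' j) wstar x - pfL d n μ f f' φ j x)
      = n * ((1 / (n : ℝ)) * ∑ i, f i wstar - pfB d n μ f f' φ x + μ / 2 * ‖x - wstar‖ ^ 2) := by
  rw [Finset.sum_sub_distrib, sum_quadModel, hgrad_star, inner_zero_left, add_zero, pfB,
    Finset.card_univ, Fintype.card_fin]
  field_simp
  ring

end ProxFinito

theorem prox_finito_one_step (d n : ℕ) (hn : 1 ≤ n) (μ L : ℝ)
    (hμ : 0 < μ) (hμL : μ ≤ L)
    (f : Fin n → EuclideanSpace ℝ (Fin d) → ℝ)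
    (f' : Fin n → EuclideanSpace ℝ (Fin d) → EuclideanSpace ℝ (Fin d))
    (hgrad : ∀ i x, HasGradientAt (f i) (f' i x) x)
    (hsmooth : ∀ i x y, ‖f' i x - f' i y‖ ≤ L * ‖x - y‖)
    (hsc : ∀ i x y, f i x ≥ f i y + ⟪f' i y, x - y⟫ + μ / 2 * ‖x - y‖ ^ 2)
    (wstar : EuclideanSpace ℝ (Fin d))
    (hstar : ∀ x, (1 / (n : ℝ)) * ∑ i, f i wstar ≤ (1 / (n : ℝ)) * ∑ i, f i x)
    (φ : Fin n → EuclideanSpace ℝ (Fin d))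
    (z : Fin n → EuclideanSpace ℝ (Fin d))
    (hz : ∀ j y,
      (1 / (n : ℝ)) * f j (z j)
          + (1 / (n : ℝ)) * ∑ i ∈ Finset.univ.erase j, pfL d n μ f f' φ i (z j)
        ≤ (1 / (n : ℝ)) * f j y
          + (1 / (n : ℝ)) * ∑ i ∈ Finset.univ.erase j, pfL d n μ f f' φ i y) :
    (1 / (n : ℝ)) * ∑ j, ((1 / (n : ℝ)) * ∑ i, f i wstar
        - pfB d n μ f f' (Function.update φ j (z j))
            (pfW d n μ f' (Function.update φ j (z j))))
      ≤ (1 - μ / (μ * n + L - μ)) *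
          ((1 / (n : ℝ)) * ∑ i, f i wstar - pfB d n μ f f' φ (pfW d n μ f' φ)) := by
  have hn0 : n ≠ 0 := by omega
  have hgrad_star : ∑ i, f' i wstar = 0 :=
    (HasGradientAt.sum fun i _ => hgrad i wstar).eq_zero_of_forall_le fun x =>
      le_of_mul_le_mul_left (hstar x) (by positivity)
  have hstep j := pfB_add_le_pfB_update hn0 hμ hμL hgrad hsmooth hsc wstar (hz j)
  set w := pfW d n μ f' φ
  set c := μ / (μ * n + L - μ)
  have hc : 0 ≤ c := div_nonneg hμ.le (by nlinarith [(Nat.one_le_cast (α := ℝ)).mpr hn])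
  calc _ ≤ (1 / (n : ℝ)) * ∑ j, ((1 / (n : ℝ)) * ∑ i, f i wstar - pfB d n μ f f' φ w
          - c * (quadModel μ (f j) (f' j) wstar w - pfL d n μ f f' φ j w)) := by
        refine mul_le_mul_of_nonneg_left (Finset.sum_le_sum fun j _ => ?_) (by positivity)
        linarith [hstep j]
    _ = (1 - c) * ((1 / (n : ℝ)) * ∑ i, f i wstar - pfB d n μ f f' φ w)
          - c * (μ / 2 * ‖w - wstar‖ ^ 2) := by
        rw [Finset.sum_sub_distrib, ← Finset.mul_sum, sum_quadModel_sub_pfL hn0 hgrad_star,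
          Finset.sum_const, Finset.card_univ, Fintype.card_fin, nsmul_eq_mul]
        field_simp
        ring
    _ ≤ _ := by
        have : 0 ≤ c * (μ / 2 * ‖w - wstar‖ ^ 2) := by positivity
        linarith
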